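/- arXiv:2502.00919 — 3 statements merged into one kernel-verified Lean document; each statement's English description precedes it below -/
import Mathlib

section
/- The second-layer attention logit of the separator token (j = t) diverges to minus infinity: q_s(t) → −∞ as s → ∞. -/
open Real Filter Finset Topology

/-- Attention scores: `c_s(i,j) = x_i * x_j + 1` if `i ≠ t` and `j ≠ t`,
`c_s(i,j) = s` if exactly one of `i, j` equals `t`, and `c_s(t,t) = s ^ 2`. -/
noncomputable def score (t : ℕ) (x : ℕ → ℝ) (s : ℝ) (i j : ℕ) : ℝ :=
  if i = t ∧ j = t then s ^ 2
  else if i = t ∨ j = t then s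
  else x i * x j + 1

/-- First-layer causal attention weights
`A_s(i,j) = exp (c_s(i,j)) / ∑_{k=1}^{i} exp (c_s(i,k))`. -/
noncomputable def attn (t : ℕ) (x : ℕ → ℝ) (s : ℝ) (i j : ℕ) : ℝ :=
  Real.exp (score t x s i j) / ∑ k ∈ Finset.Icc 1 i, Real.exp (score t x s i k)

lemma attn_Tt (T t : ℕ) (ht : 1 ≤ t) (htT : t < T) (x : ℕ → ℝ) (s : ℝ) :
    attn t x s T t =
      Real.exp s / (Real.exp s + ∑ k ∈ (Finset.Icc 1 T).erase t, Real.exp (x T * x k + 1)) := by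
  have hTt : T ≠ t := htT.ne'
  have hmem : t ∈ Finset.Icc 1 T := by simp [ht, htT.le]
  unfold attn
  rw [← Finset.add_sum_erase _ _ hmem]
  have h1 : score t x s T t = s := by simp [score, hTt]
  rw [h1]
  congr 2
  refine Finset.sum_congr rfl fun k hk => ?_
  have hk' : k ≠ t := Finset.ne_of_mem_erase hk
  simp [score, hTt, hk']

lemma attn_tt (t : ℕ) (ht : 1 ≤ t) (x : ℕ → ℝ) (s : ℝ) :
    attn t x s t t = Real.exp (s ^ 2) / (Real.exp (s ^ 2) + (t - 1 : ℕ) * Real.exp s) := by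
  have hmem : t ∈ Finset.Icc 1 t := by simp [ht]
  unfold attn
  rw [← Finset.add_sum_erase _ _ hmem]
  have h1 : score t x s t t = s ^ 2 := by simp [score]
  rw [h1]
  have h2 : ∑ k ∈ (Finset.Icc 1 t).erase t, Real.exp (score t x s t k)
      = ((t - 1 : ℕ) : ℝ) * Real.exp s := by
    have hcong : ∀ k ∈ (Finset.Icc 1 t).erase t, Real.exp (score t x s t k) = Real.exp s := by
      intro k hk
      have hk' : k ≠ t := Finset.ne_of_mem_erase hk
      simp [score, hk']
    rw [Finset.sum_congr rfl hcong, Finset.sum_const, Finset.card_erase_of_mem hmem,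
      Nat.card_Icc, nsmul_eq_mul]
    norm_num
  rw [h2]

lemma attn_Tt_lim (T t : ℕ) (ht : 1 ≤ t) (htT : t < T) (x : ℕ → ℝ) :
    Tendsto (fun s => attn t x s T t) atTop (𝓝 1) := by
  set C := ∑ k ∈ (Finset.Icc 1 T).erase t, Real.exp (x T * x k + 1) with hC
  have hC0 : 0 ≤ C := Finset.sum_nonneg fun k _ => (Real.exp_pos _).le
  have heq : ∀ s : ℝ, attn t x s T t = 1 / (1 + C * Real.exp (-s)) := by
    intro s
    rw [attn_Tt T t ht htT x s, Real.exp_neg]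
    have h1 : Real.exp s ≠ 0 := (Real.exp_pos s).ne'
    have h2 : Real.exp s + C ≠ 0 := by positivity
    field_simp
    rw [hC]
  simp only [heq, one_div]
  have hlim : Tendsto (fun s : ℝ => 1 + C * Real.exp (-s)) atTop (𝓝 1) := by
    have : Tendsto (fun s : ℝ => Real.exp (-s)) atTop (𝓝 0) :=
      Real.tendsto_exp_atBot.comp tendsto_neg_atTop_atBot
    have := (tendsto_const_nhds (x := C)).mul this
    simpa using (tendsto_const_nhds (x := (1:ℝ))).add this
  simpa using hlim.inv₀ one_ne_zero

lemma attn_tt_lim (t : ℕ) (ht : 1 ≤ t) (x : ℕ → ℝ) :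
    Tendsto (fun s => attn t x s t t) atTop (𝓝 1) := by
  have heq : ∀ s : ℝ, attn t x s t t = 1 / (1 + (t - 1 : ℕ) * Real.exp (s - s ^ 2)) := by
    intro s
    rw [attn_tt t ht x s, Real.exp_sub]
    have h1 : Real.exp (s ^ 2) ≠ 0 := (Real.exp_pos _).ne'
    have h2 : Real.exp (s ^ 2) + (t - 1 : ℕ) * Real.exp s ≠ 0 := by positivity
    field_simp
  simp only [heq, one_div]
  have hsb : Tendsto (fun s : ℝ => s - s ^ 2) atTop atBot := by
    have h1 : Tendsto (fun s : ℝ => 1 - s) atTop atBot := by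
      have := tendsto_neg_atTop_atBot (G := ℝ)
      simpa [sub_eq_add_neg] using tendsto_atBot_add_const_left (l := atTop) (1 : ℝ) this
    have := (tendsto_id : Tendsto id (atTop : Filter ℝ) atTop).atTop_mul_atBot₀ h1
    convert this using 2 with s
    simp only [id]
    ring
  have hlim : Tendsto (fun s : ℝ => 1 + (t - 1 : ℕ) * Real.exp (s - s ^ 2)) atTop (𝓝 1) := by
    have : Tendsto (fun s : ℝ => Real.exp (s - s ^ 2)) atTop (𝓝 0) :=
      Real.tendsto_exp_atBot.comp hsb
    have := (tendsto_const_nhds (x := ((t - 1 : ℕ) : ℝ))).mul this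
    simpa using (tendsto_const_nhds (x := (1:ℝ))).add this
  simpa using hlim.inv₀ one_ne_zero

/-- `g_s(j)`: the factor `h_j - h_T` contributes to the second-layer logit. -/
noncomputable def gfun (T t : ℕ) (x : ℕ → ℝ) (s : ℝ) (j : ℕ) : ℝ :=
  if j < t then -(s - 1) * attn t x s T t
  else if j = t then -(s - 1) * (1 - attn t x s t t + attn t x s T t)
  else (s - 1) * (attn t x s j t - attn t x s T t)

/-- Second-layer attention logits
`q_s(j) = (b * x_T + d * (s-1) * A_s(T,t)) * g_s(j)`. -/
noncomputable def qfun (T t : ℕ) (x : ℕ → ℝ) (b d : ℝ) (s : ℝ) (j : ℕ) : ℝ :=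
  (b * x T + d * (s - 1) * attn t x s T t) * gfun T t x s j

/-- Second-layer attention weights `B_s(j) = exp (q_s(j)) / ∑_{k=1}^{T} exp (q_s(k))`. -/
noncomputable def battn (T t : ℕ) (x : ℕ → ℝ) (b d : ℝ) (s : ℝ) (j : ℕ) : ℝ :=
  Real.exp (qfun T t x b d s j) / ∑ k ∈ Finset.Icc 1 T, Real.exp (qfun T t x b d s k)

theorem sink_logit_diverges (T t : ℕ) (ht : 1 ≤ t) (htT : t < T) (x : ℕ → ℝ) (hxt : x t = 0)
    (b d : ℝ) (hd : 0 < d) :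
    Filter.Tendsto (fun s : ℝ => qfun T t x b d s t) Filter.atTop Filter.atBot := by
  have hA := attn_Tt_lim T t ht htT x
  have hB := attn_tt_lim t ht x
  have hq : ∀ s : ℝ, qfun T t x b d s t =
      -(((s - 1) * (b * x T + d * (s - 1) * attn t x s T t)) *
        (1 - attn t x s t t + attn t x s T t)) := by
    intro s
    simp only [qfun, gfun, lt_irrefl, if_false, if_pos rfl, if_true]
    ring
  simp only [hq]
  have h1 : Tendsto (fun s : ℝ => s - 1) atTop atTop :=
    tendsto_atTop_add_const_right _ _ tendsto_id
  have h2 : Tendsto (fun s : ℝ => b * x T + d * (s - 1) * attn t x s T t) atTop atTop := by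
    apply tendsto_atTop_add_const_left
    exact ((h1.const_mul_atTop hd).atTop_mul_pos one_pos hA)
  have h3 : Tendsto (fun s : ℝ => 1 - attn t x s t t + attn t x s T t) atTop (𝓝 1) := by
    have := ((tendsto_const_nhds (x := (1:ℝ))).sub hB).add hA
    simpa using this
  have h4 := (h1.atTop_mul_atTop₀ h2).atTop_mul_pos one_pos h3
  exact tendsto_neg_atTop_atBot.comp h4
end

section
/- The second-layer attention logit of the separator token satisfies the precise asymptotics q_s(t) / s² → −d as s → ∞. -/
open Real Filter Finset Topology

lemma attn_Tt_eq (T t : ℕ) (ht : 1 ≤ t) (htT : t < T) (x : ℕ → ℝ) (s : ℝ) :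
    attn t x s T t =
      (1 + (∑ k ∈ (Finset.Icc 1 T).erase t, Real.exp (x T * x k + 1)) * Real.exp (-s))⁻¹ := by
  have hTt : T ≠ t := htT.ne'
  have hmem : t ∈ Finset.Icc 1 T := Finset.mem_Icc.mpr ⟨ht, htT.le⟩
  have hscore : score t x s T t = s := by simp [score, hTt]
  have hden : ∑ k ∈ Finset.Icc 1 T, Real.exp (score t x s T k)
      = (∑ k ∈ (Finset.Icc 1 T).erase t, Real.exp (x T * x k + 1)) + Real.exp s := by
    rw [← Finset.sum_erase_add _ _ hmem, hscore]
    congr 1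
    refine Finset.sum_congr rfl fun k hk => ?_
    have hk' : k ≠ t := Finset.ne_of_mem_erase hk
    simp [score, hTt, hk']
  set C := ∑ k ∈ (Finset.Icc 1 T).erase t, Real.exp (x T * x k + 1) with hC
  have hCpos : 0 ≤ C := Finset.sum_nonneg fun k _ => (Real.exp_pos _).le
  have hes : (0:ℝ) < Real.exp s := Real.exp_pos s
  have hne : C + Real.exp s ≠ 0 := by positivity
  rw [attn, hscore, hden, Real.exp_neg]
  field_simp
  ring

lemma attn_tt_eq (t : ℕ) (ht : 1 ≤ t) (x : ℕ → ℝ) (s : ℝ) :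
    attn t x s t t = (1 + ((t : ℝ) - 1) * Real.exp (s - s ^ 2))⁻¹ := by
  have hmem : t ∈ Finset.Icc 1 t := Finset.mem_Icc.mpr ⟨ht, le_rfl⟩
  have hscore : score t x s t t = s ^ 2 := by simp [score]
  have hden : ∑ k ∈ Finset.Icc 1 t, Real.exp (score t x s t k)
      = ((t : ℝ) - 1) * Real.exp s + Real.exp (s ^ 2) := by
    rw [← Finset.sum_erase_add _ _ hmem, hscore]
    congr 1
    have hcard : ((Finset.Icc 1 t).erase t).card = t - 1 := by
      rw [Finset.card_erase_of_mem hmem, Nat.card_Icc]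
      omega
    calc ∑ k ∈ (Finset.Icc 1 t).erase t, Real.exp (score t x s t k)
        = ∑ k ∈ (Finset.Icc 1 t).erase t, Real.exp s := by
          refine Finset.sum_congr rfl fun k hk => ?_
          have hk' : k ≠ t := Finset.ne_of_mem_erase hk
          simp [score, hk']
      _ = ((t : ℝ) - 1) * Real.exp s := by
          rw [Finset.sum_const, hcard, nsmul_eq_mul, Nat.cast_sub ht, Nat.cast_one]
  have ht1 : (1 : ℝ) ≤ (t : ℝ) := by exact_mod_cast ht
  have hne : ((t : ℝ) - 1) * Real.exp s + Real.exp (s ^ 2) ≠ 0 := by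
    have := Real.exp_pos s
    have := Real.exp_pos (s ^ 2)
    nlinarith
  have hc : (0:ℝ) < 1 + ((t : ℝ) - 1) * Real.exp (s - s ^ 2) := by
    nlinarith [Real.exp_pos (s - s ^ 2)]
  rw [attn, hscore, hden, div_eq_iff hne, Real.exp_sub, inv_mul_eq_div]
  have hc' : 1 + ((t : ℝ) - 1) * (Real.exp s / Real.exp (s ^ 2)) ≠ 0 := by
    have h1 := div_pos (Real.exp_pos s) (Real.exp_pos (s ^ 2))
    nlinarith
  rw [eq_div_iff hc']
  field_simp
  ring

theorem sink_logit_asymptotics (T t : ℕ) (ht : 1 ≤ t) (htT : t < T) (x : ℕ → ℝ) (hxt : x t = 0)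
    (b d : ℝ) (hd : 0 < d) :
    Filter.Tendsto (fun s : ℝ => qfun T t x b d s t / s ^ 2)
      Filter.atTop (nhds (-d)) := by
  set C := ∑ k ∈ (Finset.Icc 1 T).erase t, Real.exp (x T * x k + 1) with hC
  have h1 : Filter.Tendsto (fun s : ℝ => attn t x s T t) Filter.atTop (nhds 1) := by
    simp only [attn_Tt_eq T t ht htT x, ← hC]
    have h0 : Filter.Tendsto (fun s : ℝ => Real.exp (-s)) Filter.atTop (nhds 0) :=
      Real.tendsto_exp_atBot.comp tendsto_neg_atTop_atBot
    have hden : Filter.Tendsto (fun s : ℝ => 1 + C * Real.exp (-s)) Filter.atTop (nhds 1) := by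
      simpa using tendsto_const_nhds.add (tendsto_const_nhds.mul h0)
    simpa using hden.inv₀ (by norm_num)
  have h2 : Filter.Tendsto (fun s : ℝ => attn t x s t t) Filter.atTop (nhds 1) := by
    simp only [attn_tt_eq t ht x]
    have hbot : Filter.Tendsto (fun s : ℝ => s - s ^ 2) Filter.atTop Filter.atBot := by
      have hmul : Filter.Tendsto (fun s : ℝ => s * (s - 1)) Filter.atTop Filter.atTop :=
        Filter.Tendsto.atTop_mul_atTop₀ tendsto_id (tendsto_atTop_add_const_right _ (-1) tendsto_id)
      have := (tendsto_neg_atTop_atBot.comp hmul)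
      refine this.congr fun s => ?_
      simp [Function.comp]; ring
    have h0 : Filter.Tendsto (fun s : ℝ => Real.exp (s - s ^ 2)) Filter.atTop (nhds 0) :=
      Real.tendsto_exp_atBot.comp hbot
    have hden : Filter.Tendsto (fun s : ℝ => 1 + ((t : ℝ) - 1) * Real.exp (s - s ^ 2))
        Filter.atTop (nhds 1) := by
      simpa using tendsto_const_nhds.add (tendsto_const_nhds.mul h0)
    simpa using hden.inv₀ (by norm_num)
  have h3 : Filter.Tendsto (fun s : ℝ => (s - 1) / s ^ 2) Filter.atTop (nhds 0) := by
    have hi : Filter.Tendsto (fun s : ℝ => s⁻¹) Filter.atTop (nhds 0) := tendsto_inv_atTop_zero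
    have : Filter.Tendsto (fun s : ℝ => s⁻¹ - s⁻¹ * s⁻¹) Filter.atTop (nhds 0) := by
      simpa using hi.sub (hi.mul hi)
    refine this.congr' ?_
    filter_upwards [eventually_gt_atTop (0 : ℝ)] with s hs
    have hs' : s ≠ 0 := hs.ne'
    rw [eq_div_iff (by positivity : (s : ℝ) ^ 2 ≠ 0)]
    field_simp
    try ring
    try tauto
  have h4 : Filter.Tendsto (fun s : ℝ => (s - 1) ^ 2 / s ^ 2) Filter.atTop (nhds 1) := by
    have : Filter.Tendsto (fun s : ℝ => (1 - s⁻¹) ^ 2) Filter.atTop (nhds 1) := by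
      have := ((tendsto_const_nhds : Filter.Tendsto (fun _ : ℝ => (1:ℝ)) Filter.atTop
        (nhds 1)).sub tendsto_inv_atTop_zero).pow 2
      simpa using this
    refine this.congr' ?_
    filter_upwards [eventually_gt_atTop (0 : ℝ)] with s hs
    have hs' : s ≠ 0 := hs.ne'
    rw [eq_div_iff (by positivity : (s : ℝ) ^ 2 ≠ 0)]
    field_simp
    try ring
    try tauto
  have hG : Filter.Tendsto (fun s : ℝ =>
      (b * x T * ((s - 1) / s ^ 2) + d * ((s - 1) ^ 2 / s ^ 2) * attn t x s T t) *
        (-(1 - attn t x s t t + attn t x s T t))) Filter.atTop (nhds (-d)) := by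
    have hcb : Filter.Tendsto (fun _ : ℝ => b * x T) Filter.atTop (nhds (b * x T)) :=
      tendsto_const_nhds
    have hcd : Filter.Tendsto (fun _ : ℝ => d) Filter.atTop (nhds d) := tendsto_const_nhds
    have hc1 : Filter.Tendsto (fun _ : ℝ => (1:ℝ)) Filter.atTop (nhds 1) := tendsto_const_nhds
    have := ((hcb.mul h3).add ((hcd.mul h4).mul h1)).mul ((hc1.sub h2).add h1).neg
    simpa using this
  refine hG.congr' ?_
  filter_upwards [eventually_gt_atTop (0 : ℝ)] with s hs
  unfold qfun gfun
  simp only [lt_irrefl, if_false, if_true, ite_true, ite_false, if_pos rfl]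
  field_simp
end

section
/- For every index j with t < j ≤ T, the second-layer attention weight of the last token on token j converges to the uniform value over the tagged tokens: B_s(j) = exp(q_s(j)) / Σ_{k=1}^{T} exp(q_s(k)) → 1/(T − t) as s → ∞. -/
open Real Filter Finset Topology

/-- The constant part of the softmax denominator at a row `i ≠ t`. -/
noncomputable def Cc (t : ℕ) (x : ℕ → ℝ) (i : ℕ) : ℝ :=
  ∑ k ∈ (Finset.Icc 1 i).erase t, Real.exp (x i * x k + 1)

/-- The simplified form of `attn t x s i t` for `t < i`. -/
noncomputable def EA (t : ℕ) (x : ℕ → ℝ) (i : ℕ) (s : ℝ) : ℝ :=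
  Real.exp s / (Real.exp s + Cc t x i)

lemma Cc_pos {t i : ℕ} (x : ℕ → ℝ) (ht : 1 ≤ t) (hti : t < i) : 0 < Cc t x i := by
  apply Finset.sum_pos (fun k _ => Real.exp_pos _)
  exact ⟨i, Finset.mem_erase.mpr ⟨hti.ne', Finset.mem_Icc.mpr ⟨ht.trans hti.le, le_rfl⟩⟩⟩

lemma attn_eq {t i : ℕ} (x : ℕ → ℝ) (s : ℝ) (ht : 1 ≤ t) (hti : t < i) :
    attn t x s i t = EA t x i s := by
  have hmem : t ∈ Finset.Icc 1 i := Finset.mem_Icc.mpr ⟨ht, hti.le⟩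
  have hne : i ≠ t := hti.ne'
  have hsc : score t x s i t = s := by simp [score, hne]
  unfold attn EA
  rw [hsc]
  congr 1
  rw [← Finset.add_sum_erase _ _ hmem, hsc]
  congr 1
  apply Finset.sum_congr rfl
  intro k hk
  have hk' : k ≠ t := (Finset.mem_erase.mp hk).1
  simp [score, hne, hk']

lemma attn_nonneg (t : ℕ) (x : ℕ → ℝ) (s : ℝ) (i j : ℕ) : 0 ≤ attn t x s i j :=
  div_nonneg (Real.exp_pos _).le (Finset.sum_nonneg fun _ _ => (Real.exp_pos _).le)

lemma attn_le_one {t i j : ℕ} (x : ℕ → ℝ) (s : ℝ) (hj : j ∈ Finset.Icc 1 i) :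
    attn t x s i j ≤ 1 := by
  unfold attn
  rw [div_le_one (Finset.sum_pos (fun k _ => Real.exp_pos _) ⟨j, hj⟩)]
  exact Finset.single_le_sum (fun k _ => (Real.exp_pos _).le) hj

lemma tendsto_EA {t i : ℕ} (x : ℕ → ℝ) (ht : 1 ≤ t) (hti : t < i) :
    Tendsto (EA t x i) atTop (𝓝 1) := by
  have hC : 0 < Cc t x i := Cc_pos x ht hti
  have h : ∀ s : ℝ, EA t x i s = (1 + Cc t x i * Real.exp (-s))⁻¹ := by
    intro s
    have h1 : Real.exp s + Cc t x i ≠ 0 := by positivity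
    unfold EA
    rw [Real.exp_neg]
    field_simp
  have h2 : Tendsto (fun s : ℝ => 1 + Cc t x i * Real.exp (-s)) atTop (𝓝 1) := by
    have h3 := (Real.tendsto_exp_neg_atTop_nhds_zero).const_mul (Cc t x i)
    simpa using tendsto_const_nhds.add h3
  exact Tendsto.congr (fun s => (h s).symm) (by simpa using h2.inv₀ one_ne_zero)

lemma tendsto_sub_one_pow_mul_exp_neg (n : ℕ) :
    Tendsto (fun s : ℝ => (s - 1) ^ n * Real.exp (-s)) atTop (𝓝 0) := by
  have h1 : Tendsto (fun s : ℝ => s - 1) atTop atTop := by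
    simpa [sub_eq_add_neg] using tendsto_atTop_add_const_right atTop (-1 : ℝ) tendsto_id
  have h2 := (tendsto_pow_mul_exp_neg_atTop_nhds_zero n).comp h1
  have h3 := h2.const_mul (Real.exp (-1))
  rw [mul_zero] at h3
  apply h3.congr
  intro s
  simp only [Function.comp_apply]
  rw [mul_comm, mul_assoc, ← Real.exp_add]
  congr 2
  ring

lemma EA_sub {t k T : ℕ} (x : ℕ → ℝ) (ht : 1 ≤ t) (htk : t < k) (htT : t < T) (s : ℝ) :
    EA t x k s - EA t x T s
      = (Cc t x T - Cc t x k) * Real.exp (-s) * (EA t x k s * EA t x T s) := by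
  have e1 : Real.exp s + Cc t x k ≠ 0 := by
    have := Cc_pos x ht htk; positivity
  have e2 : Real.exp s + Cc t x T ≠ 0 := by
    have := Cc_pos x ht htT; positivity
  unfold EA
  rw [Real.exp_neg]
  field_simp
  ring

theorem second_layer_weight_uniform (T t : ℕ) (ht : 1 ≤ t) (htT : t < T) (x : ℕ → ℝ) (hxt : x t = 0)
    (b d : ℝ) (hd : 0 < d)
    (j : ℕ) (htj : t < j) (hjT : j ≤ T) :
    Filter.Tendsto (fun s : ℝ => battn T t x b d s j)
      Filter.atTop (nhds (1 / ((T : ℝ) - (t : ℝ)))) := by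
  have hAT : ∀ s, attn t x s T t = EA t x T s := fun s => attn_eq x s ht htT
  have hEAT : Tendsto (EA t x T) atTop (𝓝 1) := tendsto_EA x ht htT
  have hATl : Tendsto (fun s => attn t x s T t) atTop (𝓝 1) := by
    simpa [hAT] using hEAT
  have hsub : Tendsto (fun s : ℝ => s - 1) atTop atTop := by
    simpa [sub_eq_add_neg] using tendsto_atTop_add_const_right atTop (-1 : ℝ) tendsto_id
  have hsAT : Tendsto (fun s : ℝ => (s - 1) * attn t x s T t) atTop atTop :=
    hsub.atTop_mul_pos one_pos hATl
  have hP : Tendsto (fun s : ℝ => b * x T + d * (s - 1) * attn t x s T t) atTop atTop := by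
    have := tendsto_atTop_add_const_left atTop (b * x T) (hsAT.const_mul_atTop hd)
    apply this.congr
    intro s; ring
  have key : ∀ k ∈ Finset.Icc 1 T, Tendsto (fun s => Real.exp (qfun T t x b d s k)) atTop
      (𝓝 (if k ≤ t then 0 else 1)) := by
    intro k hk
    rw [Finset.mem_Icc] at hk
    by_cases hkt : k ≤ t
    · rw [if_pos hkt]
      have hgle : ∀ᶠ s : ℝ in atTop, gfun T t x s k ≤ -(s - 1) * attn t x s T t := by
        filter_upwards [eventually_ge_atTop (1 : ℝ)] with s hs
        unfold gfun
        rcases lt_or_eq_of_le hkt with h | h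
        · rw [if_pos h]
        · rw [if_neg (by omega), if_pos h]
          have h1 : attn t x s t t ≤ 1 :=
            attn_le_one x s (Finset.mem_Icc.mpr ⟨ht, le_rfl⟩)
          nlinarith [attn_nonneg t x s T t]
      have hPpos : ∀ᶠ s : ℝ in atTop,
          0 ≤ b * x T + d * (s - 1) * attn t x s T t := hP.eventually_ge_atTop 0
      have hqle : ∀ᶠ s : ℝ in atTop, qfun T t x b d s k ≤
          (b * x T + d * (s - 1) * attn t x s T t) * (-(s - 1) * attn t x s T t) := by
        filter_upwards [hgle, hPpos] with s h1 h2
        exact mul_le_mul_of_nonneg_left h1 h2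
      have hbot : Tendsto (fun s : ℝ => (b * x T + d * (s - 1) * attn t x s T t) *
          (-(s - 1) * attn t x s T t)) atTop atBot := by
        have h1 := hP.atTop_mul_atTop₀ hsAT
        have h2 := tendsto_neg_atTop_atBot.comp h1
        apply h2.congr
        intro s
        simp only [Function.comp_apply]
        ring
      have hq : Tendsto (fun s => qfun T t x b d s k) atTop atBot :=
        tendsto_atBot_mono' atTop hqle hbot
      exact Real.tendsto_exp_atBot.comp hq
    · rw [if_neg hkt]
      push_neg at hkt
      have hAk : ∀ s, attn t x s k t = EA t x k s := fun s => attn_eq x s ht hkt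
      have hEAk : Tendsto (EA t x k) atTop (𝓝 1) := tendsto_EA x ht hkt
      have hg : ∀ s, gfun T t x s k = (s - 1) * (EA t x k s - EA t x T s) := by
        intro s
        unfold gfun
        rw [if_neg (by omega), if_neg (by omega), hAk, hAT]
      have hΔ : ∀ n : ℕ, Tendsto (fun s : ℝ => (s - 1) ^ n * (EA t x k s - EA t x T s))
          atTop (𝓝 0) := by
        intro n
        have heq : ∀ s : ℝ, (s - 1) ^ n * (EA t x k s - EA t x T s)
            = (Cc t x T - Cc t x k) * ((s - 1) ^ n * Real.exp (-s)) *
              (EA t x k s * EA t x T s) := by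
          intro s
          rw [EA_sub x ht hkt htT s]
          ring
        have h1 := ((tendsto_sub_one_pow_mul_exp_neg n).const_mul
          (Cc t x T - Cc t x k)).mul (hEAk.mul hEAT)
        rw [mul_zero, zero_mul] at h1
        exact Tendsto.congr (fun s => (heq s).symm) h1
      have hqeq : ∀ s : ℝ, qfun T t x b d s k =
          b * x T * ((s - 1) ^ 1 * (EA t x k s - EA t x T s)) +
          d * EA t x T s * ((s - 1) ^ 2 * (EA t x k s - EA t x T s)) := by
        intro s
        unfold qfun
        rw [hg, hAT]
        ring
      have h2 : Tendsto (fun s : ℝ => qfun T t x b d s k) atTop (𝓝 0) := by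
        have hA := (((hΔ 1).const_mul (b * x T))).add ((hEAT.const_mul d).mul (hΔ 2))
        rw [mul_zero, mul_zero, add_zero] at hA
        exact Tendsto.congr (fun s => (hqeq s).symm) hA
      have := (Real.continuous_exp.tendsto 0).comp h2
      simpa [Function.comp_def] using this
  have hsum : Tendsto (fun s => ∑ k ∈ Finset.Icc 1 T, Real.exp (qfun T t x b d s k)) atTop
      (𝓝 ((T : ℝ) - t)) := by
    have h1 := tendsto_finset_sum (Finset.Icc 1 T) key
    have hval : ∑ k ∈ Finset.Icc 1 T, (if k ≤ t then (0 : ℝ) else 1) = (T : ℝ) - t := by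
      rw [Finset.sum_ite, Finset.sum_const, Finset.sum_const]
      have hfil : (Finset.Icc 1 T).filter (fun k => ¬ k ≤ t) = Finset.Icc (t + 1) T := by
        ext m
        simp only [Finset.mem_filter, Finset.mem_Icc, not_le]
        omega
      rw [hfil, Nat.card_Icc]
      simp only [smul_zero, zero_add, nsmul_eq_mul, mul_one]
      rw [show T + 1 - (t + 1) = T - t by omega, Nat.cast_sub htT.le]
    rwa [hval] at h1
  have hnum := key j (Finset.mem_Icc.mpr ⟨by omega, hjT⟩)
  rw [if_neg (by omega)] at hnum
  have hden : ((T : ℝ) - t) ≠ 0 := by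
    have : (t : ℝ) < T := by exact_mod_cast htT
    linarith
  have hfin := hnum.div hsum hden
  unfold battn
  exact hfin
end
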